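/- With δ(A) = p·trdeg(A) − |A∩N|: if B ≤ A is a minimal self-sufficient extension of finite sets, all points of A∖B are black, and δ(A/B) = p−1, then A = B ∪ {a} for a single black point a transcendental over the field generated by B. -/

import Mathlib

/-!
Every new point of `A` is black, so adjoining one of them, `a`, changes `δ` by
`p·(trdeg(B ∪ {a}) − trdeg B) − 1`, which is `p − 1` or `−1` according as `a` is transcendental
or algebraic over `B`. In particular `δ(B ∪ {a} / B) ≤ p − 1`; if `B ∪ {a}` were a proper
subset of `A`, minimality would give `δ(A / B ∪ {a}) < 0` and hence `δ(A/B) < p − 1`. So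
`A = B ∪ {a}`, and `δ(A/B) = p − 1 ≠ −1` forces `a` to be transcendental.

The transcendence degree `ftrdeg` is the rank function of the algebraic matroid of `K` over its
prime field, which supplies the rank bounds.
-/

open scoped Classical

noncomputable def ftrdeg (K : Type*) [Field K] (A : Finset K) : ℕ :=
  sSup {n | ∃ s ⊆ A, s.card = n ∧
    AlgebraicIndependent (⊥ : Subfield K) (fun x : {y : K // y ∈ s} => (x : K))}

noncomputable def deltaF (K : Type*) [Field K] (p : ℕ) (N : Set K) (A : Finset K) : ℤ :=
  (p : ℤ) * ftrdeg K A - (A.filter (· ∈ N)).card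

section

variable {K : Type*} [Field K]

abbrev primeAlgMatroid (K : Type*) [Field K] : Matroid K :=
  AlgebraicIndependent.matroid (⊥ : Subfield K) K

theorem ftrdeg_eq_eRk (A : Finset K) : (ftrdeg K A : ℕ∞) = (primeAlgMatroid K).eRk A := by
  obtain ⟨I, hI⟩ := (primeAlgMatroid K).exists_isBasis' A
  have hIA : I ⊆ A := hI.subset
  lift I to Finset K using (A.finite_toSet.subset hIA)
  rw [← hI.encard_eq_eRk, Set.encard_coe_eq_coe_finsetCard, Nat.cast_inj]
  apply le_antisymm
  · refine csSup_le' fun n ⟨s, hsA, hn, hs⟩ => hn ▸ ?_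
    have hle : (s : Set K).encard ≤ (primeAlgMatroid K).eRk A :=
      Matroid.Indep.encard_le_eRk_of_subset hs (Finset.coe_subset.2 hsA)
    rwa [← hI.encard_eq_eRk, Set.encard_coe_eq_coe_finsetCard, Set.encard_coe_eq_coe_finsetCard,
      Nat.cast_le] at hle
  · exact le_csSup ⟨A.card, fun n ⟨s, hsA, hn, _⟩ => hn ▸ Finset.card_le_card hsA⟩
      ⟨I, Finset.coe_subset.1 hIA, rfl, hI.indep⟩

open IntermediateField.algebraAdjoinAdjoin in
theorem isAlgebraic_adjoin_bot_of_isAlgebraic_closure {S : Set K} {a : K}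
    (ha : IsAlgebraic (Subfield.closure S) a) :
    IsAlgebraic (Algebra.adjoin (⊥ : Subfield K) S) a := by
  -- `Subfield.closure S` is the fraction field of `Algebra.adjoin ⊥ S`.
  have hE : (IntermediateField.adjoin (⊥ : Subfield K) S).toSubfield = Subfield.closure S := by
    rw [IntermediateField.adjoin_toSubfield, Subfield.closure_union, sup_eq_right,
      Subfield.closure_le]
    rintro _ ⟨x, rfl⟩
    exact bot_le (a := Subfield.closure S) x.2
  rw [← hE] at ha
  exact (IsFractionRing.isAlgebraic_iff _ (IntermediateField.adjoin (⊥ : Subfield K) S) K).2 ha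

theorem ftrdeg_insert_le (B : Finset K) (a : K) : ftrdeg K (insert a B) ≤ ftrdeg K B + 1 := by
  have h := (primeAlgMatroid K).eRk_insert_le_add_one a B
  rw [← Finset.coe_insert, ← ftrdeg_eq_eRk, ← ftrdeg_eq_eRk] at h
  exact_mod_cast h

theorem ftrdeg_insert_of_isAlgebraic {B : Finset K} {a : K}
    (ha : IsAlgebraic (Subfield.closure (B : Set K)) a) :
    ftrdeg K (insert a B) = ftrdeg K B := by
  set M := primeAlgMatroid K
  have hcl : a ∈ M.closure B := by
    rw [AlgebraicIndependent.matroid_closure_eq, SetLike.mem_coe,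
      Subalgebra.mem_algebraicClosure]
    exact isAlgebraic_adjoin_bot_of_isAlgebraic_closure ha
  have h : M.eRk (insert a B) = M.eRk B := by
    rw [← M.eRk_closure_eq, M.closure_insert_eq_of_mem_closure hcl, M.eRk_closure_eq]
  rw [← Finset.coe_insert, ← ftrdeg_eq_eRk, ← ftrdeg_eq_eRk] at h
  exact_mod_cast h

section Delta

variable {p : ℕ} {N : Set K} {B : Finset K} {a : K}

theorem deltaF_insert_sub (haB : a ∉ B) (haN : a ∈ N) :
    deltaF K p N (insert a B) - deltaF K p N B =
      p * ((ftrdeg K (insert a B) : ℤ) - ftrdeg K B) - 1 := by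
  have hcard : ((insert a B).filter (· ∈ N)).card = (B.filter (· ∈ N)).card + 1 := by
    rw [Finset.filter_insert, if_pos haN,
      Finset.card_insert_of_notMem fun h => haB (Finset.mem_of_mem_filter _ h)]
  simp only [deltaF, hcard]
  push_cast
  ring

theorem deltaF_insert_sub_le (haB : a ∉ B) (haN : a ∈ N) :
    deltaF K p N (insert a B) - deltaF K p N B ≤ p - 1 := by
  have hrk : (ftrdeg K (insert a B) : ℤ) - ftrdeg K B ≤ 1 := by
    have := ftrdeg_insert_le B a
    omega
  rw [deltaF_insert_sub haB haN]
  nlinarith [Int.natCast_nonneg p]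

theorem deltaF_insert_sub_of_isAlgebraic (haB : a ∉ B) (haN : a ∈ N)
    (ha : IsAlgebraic (Subfield.closure (B : Set K)) a) :
    deltaF K p N (insert a B) - deltaF K p N B = -1 := by
  rw [deltaF_insert_sub haB haN, ftrdeg_insert_of_isAlgebraic ha]
  ring

end Delta

end

theorem minimal_extension_black_top_general (K : Type*) [Field K]
    (p : ℕ) (hp : 2 ≤ p) (N : Set K)
    (B A : Finset K) (hBA : B ⊂ A)
    (hmin : ∀ Y' : Finset K, B ⊂ Y' → Y' ⊂ A →
      deltaF K p N A - deltaF K p N Y' < 0)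
    (hblack : ∀ x ∈ A, x ∉ B → x ∈ N)
    (hd : deltaF K p N A - deltaF K p N B = (p : ℤ) - 1) :
    ∃ a : K, a ∈ N ∧ A = B ∪ {a} ∧
      Transcendental (Subfield.closure (B : Set K)) a := by
  obtain ⟨a, haA, haB⟩ := Finset.exists_of_ssubset hBA
  have haN : a ∈ N := hblack a haA haB
  have hA : A = insert a B := by
    by_contra hne
    have hlt := hmin (insert a B) (Finset.ssubset_insert haB)
      ((Finset.insert_subset haA hBA.subset).ssubset_of_ne (Ne.symm hne))
    have hle := deltaF_insert_sub_le (p := p) haB haN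
    omega
  subst hA
  refine ⟨a, haN, by rw [Finset.union_comm, ← Finset.insert_eq], fun halg => ?_⟩
  have := deltaF_insert_sub_of_isAlgebraic (p := p) haB haN halg
  omega

/-- if `B ≤ A` is a minimal self-sufficient extension of finite sets whose
new points are all black and `δ(A/B) = p − 1`, then `A = B ∪ {a}` for a single black
point `a` transcendental over the field generated by `B`. -/
theorem minimal_extension_black_top (K : Type*) [Field K] [IsAlgClosed K]
    (p : ℕ) (hp : 2 ≤ p) (N : Set K)
    (B A : Finset K) (hBA : B ⊂ A)
    (hss : ∀ C : Finset K, C ⊆ A → deltaF K p N (C ∩ B) ≤ deltaF K p N C)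
    (hmin : ∀ Y' : Finset K, B ⊂ Y' → Y' ⊂ A →
      deltaF K p N A - deltaF K p N Y' < 0)
    (hblack : ∀ x ∈ A, x ∉ B → x ∈ N)
    (hd : deltaF K p N A - deltaF K p N B = (p : ℤ) - 1) :
    ∃ a : K, a ∈ N ∧ A = B ∪ {a} ∧
      Transcendental (Subfield.closure (B : Set K)) a :=
  minimal_extension_black_top_general K p hp N B A hBA hmin hblack hd
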